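/- arXiv:1603.03315 — 2 statements merged into one kernel-verified Lean document; each statement's English description precedes it below -/
import Mathlib

section
/- For a single unordered character on a tree with fixed labels on some vertices: for an edge (u, v), let VV(u) and VV(v) be the sets of states that u and v respectively receive in some minimum-cost assignment (the root sets). If VV(u) ∩ VV(v) = ∅, then contracting the edge (u, v) (identifying u and v into a single vertex) strictly increases the MP-cost of the tree. -/
open scoped Classical

/-- The cost of a full state assignment `f`: the number of edges of `G` whose
two endpoints receive different states. -/
noncomputable def assignCost {V S : Type} [Fintype V] (G : SimpleGraph V)
    (f : V → S) : ℕ :=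
  (Finset.univ.filter (fun p : V × V => G.Adj p.1 p.2 ∧ f p.1 ≠ f p.2)).card / 2

/-- `f` extends the partial labelling `ℓ`. -/
def Extends {V S : Type} (ℓ : V → Option S) (f : V → S) : Prop :=
  ∀ v s, ℓ v = some s → f v = s

/-- The most parsimonious cost: the minimum, over all state assignments
extending the fixed labels, of the number of edges with differing endpoint states. -/
noncomputable def mpCost {V S : Type} [Fintype V] (G : SimpleGraph V)
    (ℓ : V → Option S) : ℕ :=
  sInf {c | ∃ f : V → S, Extends ℓ f ∧ c = assignCost G f}

/-- `f` is a minimum-cost assignment extending `ℓ`. -/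
def IsOptimal {V S : Type} [Fintype V] (G : SimpleGraph V) (ℓ : V → Option S)
    (f : V → S) : Prop :=
  Extends ℓ f ∧ assignCost G f = mpCost G ℓ

/-- The root set of a vertex: the set of states it receives across all
minimum-cost assignments extending the labels. -/
def rootSet {V S : Type} [Fintype V] (G : SimpleGraph V) (ℓ : V → Option S)
    (v : V) : Set S :=
  {s | ∃ f : V → S, IsOptimal G ℓ f ∧ f v = s}


/-- Contract the edge `(u, v)`: identify `u` and `v` into the single vertex
`u`, which becomes adjacent to all former neighbors of `u` and of `v`. -/
def contractGraph {V : Type} (G : SimpleGraph V) (u v : V) :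
    SimpleGraph {z : V // z ≠ v} where
  Adj a b := a ≠ b ∧
    (G.Adj a.1 b.1 ∨ (a.1 = u ∧ G.Adj v b.1) ∨ (b.1 = u ∧ G.Adj v a.1))
  symm := by
    constructor
    rintro a b ⟨hab, h⟩
    refine ⟨hab.symm, ?_⟩
    rcases h with h | ⟨h1, h2⟩ | ⟨h1, h2⟩
    · exact Or.inl h.symm
    · exact Or.inr (Or.inr ⟨h1, h2⟩)
    · exact Or.inr (Or.inl ⟨h1, h2⟩)
  loopless := by constructor; rintro a ⟨h, -⟩; exact h rfl

/-!
Take a minimum-cost assignment `g` of the contracted tree and pull it back along the quotient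
map that sends `v` to `u`. The pullback `f` extends the labels because `v` is unlabelled, and it
costs no more than `g`: the edge `uv` becomes monochromatic, and since `u` and `v` have no common
neighbour, distinct bichromatic edges of the tree stay distinct after contraction. Hence
contraction never lowers the MP-cost, and if it kept the cost, `f` would be optimal on the tree
with `f u = f v`, a state in both root sets.
-/

namespace SimpleGraph

lemma IsAcyclic.not_adj_of_adj_of_adj {V : Type} {G : SimpleGraph V} (hG : G.IsAcyclic)
    {u v w : V} (huv : G.Adj u v) (huw : G.Adj u w) : ¬ G.Adj v w := fun hvw =>
  hG.dist_ne_of_adj (u := w) huv huw.symm.reachable <| by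
    rw [dist_eq_one_iff_adj.2 huw.symm, dist_eq_one_iff_adj.2 hvw.symm]

end SimpleGraph

section Parsimony

variable {V W S : Type} [Fintype V]

lemma mpCost_le_assignCost {G : SimpleGraph V} {ℓ : V → Option S} {f : V → S}
    (hf : Extends ℓ f) : mpCost G ℓ ≤ assignCost G f :=
  Nat.sInf_le ⟨f, hf, rfl⟩

lemma isOptimal_of_assignCost_le {G : SimpleGraph V} {ℓ : V → Option S} {f : V → S}
    (hf : Extends ℓ f) (hcost : assignCost G f ≤ mpCost G ℓ) : IsOptimal G ℓ f :=
  ⟨hf, hcost.antisymm (mpCost_le_assignCost hf)⟩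

lemma exists_isOptimal [Nonempty S] (G : SimpleGraph V) (ℓ : V → Option S) :
    ∃ f, IsOptimal G ℓ f := by
  obtain ⟨f, hf, hcost⟩ := Nat.sInf_mem (s := {c | ∃ f, Extends ℓ f ∧ c = assignCost G f})
    ⟨_, fun z => (ℓ z).getD (Classical.arbitrary S), fun z s h => by simp [h], rfl⟩
  exact ⟨f, hf, hcost.symm⟩

lemma assignCost_comp_le [Fintype W] (G : SimpleGraph V) (H : SimpleGraph W) (π : V → W)
    (g : W → S) (hadj : ∀ a b, G.Adj a b → g (π a) ≠ g (π b) → H.Adj (π a) (π b))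
    (hinj : Set.InjOn (Prod.map π π) {p | G.Adj p.1 p.2 ∧ g (π p.1) ≠ g (π p.2)}) :
    assignCost G (g ∘ π) ≤ assignCost H g := by
  refine Nat.div_le_div_right (Finset.card_le_card_of_injOn (Prod.map π π) ?_ ?_)
  · rintro ⟨a, b⟩ hab
    simp only [Finset.coe_filter, Finset.mem_univ, true_and, Set.mem_ofPred_eq,
      Function.comp_apply, Prod.map] at hab ⊢
    exact ⟨hadj a b hab.1 hab.2, hab.2⟩
  · simpa using hinj

end Parsimony

section Contraction

variable {V S : Type} [DecidableEq V] {u v : V}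

def contractMap (huv : u ≠ v) (z : V) : {z : V // z ≠ v} :=
  if h : z = v then ⟨u, huv⟩ else ⟨z, h⟩

variable (huv : u ≠ v)

@[simp]
lemma contractMap_self : contractMap huv v = ⟨u, huv⟩ := dif_pos rfl

@[simp]
lemma contractMap_of_ne {z : V} (hz : z ≠ v) : contractMap huv z = ⟨z, hz⟩ := dif_neg hz

lemma contractMap_left : contractMap huv u = ⟨u, huv⟩ := contractMap_of_ne huv huv

lemma contractMap_eq_contractMap_iff {x y : V} :
    contractMap huv x = contractMap huv y ↔ x = y ∨ ((x = u ∨ x = v) ∧ (y = u ∨ y = v)) := by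
  by_cases hx : x = v <;> by_cases hy : y = v <;> simp [hx, hy, Subtype.ext_iff] <;> grind

lemma contractGraph_adj_contractMap {G : SimpleGraph V} {a b : V} (hab : G.Adj a b)
    (hne : contractMap huv a ≠ contractMap huv b) :
    (contractGraph G u v).Adj (contractMap huv a) (contractMap huv b) := by
  refine ⟨hne, ?_⟩
  have := hab.symm
  by_cases ha : a = v <;> by_cases hb : b = v <;> subst_vars <;> simp_all

lemma injOn_contractMap_bichromatic {G : SimpleGraph V}
    (hcn : ∀ w, G.Adj u w → ¬ G.Adj v w) (g : {z : V // z ≠ v} → S) :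
    Set.InjOn (Prod.map (contractMap huv) (contractMap huv))
      {p | G.Adj p.1 p.2 ∧ g (contractMap huv p.1) ≠ g (contractMap huv p.2)} := by
  have fst_eq : ∀ a b a' b', G.Adj a b → g (contractMap huv a) ≠ g (contractMap huv b) →
      G.Adj a' b' → g (contractMap huv a') ≠ g (contractMap huv b') →
      contractMap huv a = contractMap huv a' → contractMap huv b = contractMap huv b' → a = a' := by
    intro a b a' b' hab hgab hab' hgab' h1 h2
    by_contra hne
    obtain ⟨ha, ha'⟩ := ((contractMap_eq_contractMap_iff huv).1 h1).resolve_left hne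
    -- `b` and `b'` are coloured differently from the merged vertex, so they lie outside `{u, v}`
    have hb : ¬ (b = u ∨ b = v) := fun hb =>
      hgab (congrArg g ((contractMap_eq_contractMap_iff huv).2 (Or.inr ⟨ha, hb⟩)))
    have hb' : ¬ (b' = u ∨ b' = v) := fun hb' =>
      hgab' (congrArg g ((contractMap_eq_contractMap_iff huv).2 (Or.inr ⟨ha', hb'⟩)))
    obtain rfl : b = b' := ((contractMap_eq_contractMap_iff huv).1 h2).resolve_right (hb ·.1)
    rcases ha with rfl | rfl <;> rcases ha' with rfl | rfl
    exacts [hne rfl, hcn b hab hab', hcn b hab' hab, hne rfl]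
  rintro ⟨a, b⟩ ⟨hab, hgab⟩ ⟨a', b'⟩ ⟨hab', hgab'⟩ h
  obtain ⟨h1, h2⟩ := Prod.ext_iff.1 h
  exact Prod.ext (fst_eq a b a' b' hab hgab hab' hgab' h1 h2)
    (fst_eq b a b' a' hab.symm hgab.symm hab'.symm hgab'.symm h2 h1)

lemma Extends.comp_contractMap {ℓ : V → Option S} {g : {z : V // z ≠ v} → S}
    (hg : Extends (fun a => ℓ a.1) g) (hv : ℓ v = none) : Extends ℓ (g ∘ contractMap huv) := by
  intro z s hz
  have hzv : z ≠ v := by rintro rfl; simp [hv] at hz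
  simpa [hzv] using hg ⟨z, hzv⟩ s hz

lemma assignCost_comp_contractMap_le [Fintype V] {G : SimpleGraph V}
    (hcn : ∀ w, G.Adj u w → ¬ G.Adj v w) (g : {z : V // z ≠ v} → S) :
    assignCost G (g ∘ contractMap huv) ≤ assignCost (contractGraph G u v) g :=
  assignCost_comp_le _ _ _ g
    (fun _ _ hab hne => contractGraph_adj_contractMap huv hab (ne_of_apply_ne g hne))
    (injOn_contractMap_bichromatic huv hcn g)

end Contraction

theorem contract_disjoint_rootSets_increases_mpCost_general {V S : Type} [Fintype V]
    [Nonempty S] (G : SimpleGraph V) (ℓ : V → Option S) (u v : V)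
    (hT : G.IsTree) (hadj : G.Adj u v) (hv : ℓ v = none)
    (hdisj : rootSet G ℓ u ∩ rootSet G ℓ v = ∅) :
    mpCost G ℓ < mpCost (contractGraph G u v) (fun a => ℓ a.1) := by
  obtain ⟨g, hg_ext, hg_cost⟩ := exists_isOptimal (contractGraph G u v) (fun a => ℓ a.1)
  set f := g ∘ contractMap hadj.ne
  have hf : Extends ℓ f := hg_ext.comp_contractMap hadj.ne hv
  have hcost : assignCost G f ≤ mpCost (contractGraph G u v) (fun a => ℓ a.1) :=
    hg_cost ▸ assignCost_comp_contractMap_le hadj.ne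
      (fun _ => hT.isAcyclic.not_adj_of_adj_of_adj hadj) g
  by_contra! hle
  have hopt : IsOptimal G ℓ f := isOptimal_of_assignCost_le hf (hcost.trans hle)
  have hfuv : f u = f v := by simp [f, contractMap_left]
  have : f u ∈ rootSet G ℓ u ∩ rootSet G ℓ v := ⟨⟨f, hopt, rfl⟩, ⟨f, hopt, hfuv.symm⟩⟩
  simp [hdisj] at this

/-- If the root sets of the endpoints of an edge `(u, v)` (both unlabelled
internal nodes) are disjoint, then contracting the edge strictly increases the
MP-cost of the tree. -/
theorem contract_disjoint_rootSets_increases_mpCost {V S : Type} [Fintype V]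
    [Nonempty S] (G : SimpleGraph V) (ℓ : V → Option S) (u v : V)
    (hT : G.IsTree) (hadj : G.Adj u v) (hu : ℓ u = none) (hv : ℓ v = none)
    (hdisj : rootSet G ℓ u ∩ rootSet G ℓ v = ∅) :
    mpCost G ℓ < mpCost (contractGraph G u v) (fun a => ℓ a.1) :=
  contract_disjoint_rootSets_increases_mpCost_general G ℓ u v hT hadj hv hdisj
end

section
/- For a single unordered character on a rooted tree with labelled leaves, Hartigan's bottom-up rule is optimal at each node: if for internal node u with children v1,…,vd we let k(A) be the number of children whose optimal-state set (upper set) contains state A and K = max_A k(A), then the MP-cost of the subtree rooted at u equals the sum of the children's subtree MP-costs plus (d − K). -/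
open scoped Classical

/-- Rooted trees with leaves labelled by states from `S`. -/
inductive RTree (S : Type) where
  | leaf : S → RTree S
  | node : List (RTree S) → RTree S

/-- The conditional MP-cost of the subtree `t` given that its root receives
state `A` (⊤ means infeasible, i.e. a leaf forced to a different label):
the minimum number of differing-endpoint edges over assignments extending the
leaf labels with the root fixed to `A`. -/
noncomputable def condCost {S : Type} : RTree S → S → ℕ∞
  | .leaf s, A => if A = s then 0 else ⊤
  | .node ts, A =>
      (ts.attach.map (fun t => ⨅ B : S, (condCost t.1 B + if A = B then 0 else 1))).sum
  decreasing_by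
    simp_wf
    have := List.sizeOf_lt_of_mem t.2
    omega

/-- The (unconditional) MP-cost of the subtree `t`. -/
noncomputable def subMP {S : Type} (t : RTree S) : ℕ∞ := ⨅ A : S, condCost t A

/-- The upper set `VU(t)`: states achieving the minimum conditional cost. -/
noncomputable def upperSet {S : Type} (t : RTree S) : Set S :=
  {A | condCost t A = subMP t}

/-- `k(A)`: the number of children whose upper set contains `A`. -/
noncomputable def kCount {S : Type} (ts : List (RTree S)) (A : S) : ℕ :=
  (ts.map (fun t => if A ∈ upperSet t then 1 else 0)).sum

/-!
Fix the parent's state `A`. Each child either keeps `A` (cost `condCost t A`) or switches to some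
other state at the price of one edge. Costs are integers, so the best a child can do is `subMP t`,
plus one exactly when `A` is not in its upper set. Summing over the children gives
`condCost (node ts) A = Σ subMP + (d - k(A))`, and minimizing over `A` turns `d - k(A)` into
`d - K`.
-/

theorem ENat.iInf_add_ite {ι : Type*} [Nonempty ι] (f : ι → ℕ∞) (a : ι) :
    ⨅ i, (f i + if a = i then 0 else 1) = (⨅ i, f i) + if f a = ⨅ i, f i then 0 else 1 := by
  obtain ⟨i₀, hi₀⟩ := ciInf_mem f
  split_ifs with ha
  · refine le_antisymm ((iInf_le _ a).trans (by simp [ha])) (le_iInf fun i => ?_)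
    exact (add_zero _).trans_le ((iInf_le f i).trans le_self_add)
  · have hlt : ⨅ i, f i < f a := lt_of_le_of_ne (iInf_le f a) (Ne.symm ha)
    have hai₀ : a ≠ i₀ := by rintro rfl; exact ha hi₀
    refine le_antisymm ((iInf_le _ i₀).trans (by simp [hai₀, hi₀])) (le_iInf fun i => ?_)
    by_cases hai : a = i
    · subst hai
      simpa using Order.add_one_le_of_lt hlt
    · simpa [hai] using iInf_le f i

theorem List.sum_map_ite_one_zero_add_sum_map_ite_zero_one {α : Type*} (p : α → Prop)
    [DecidablePred p] (l : List α) :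
    (l.map fun x => if p x then 1 else 0).sum + (l.map fun x => if p x then 0 else 1).sum =
      l.length := by
  induction l with
  | nil => rfl
  | cons x l ih => simp only [List.map_cons, List.sum_cons, List.length_cons]; split <;> omega

theorem condCost_node {S : Type} [Nonempty S] (ts : List (RTree S)) (A : S) :
    condCost (.node ts) A = (ts.map subMP).sum + ((ts.length - kCount ts A : ℕ) : ℕ∞) := by
  have hcount := List.sum_map_ite_one_zero_add_sum_map_ite_zero_one (fun t => A ∈ upperSet t) ts
  rw [condCost, List.attach_map_val (f := fun t => ⨅ B, (condCost t B + if A = B then 0 else 1))]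
  simp only [ENat.iInf_add_ite, List.sum_map_add]
  rw [← hcount, kCount, Nat.add_sub_cancel_left, Nat.cast_list_sum, List.map_map]
  congr 1
  refine congrArg List.sum (List.map_congr_left fun t _ => ?_)
  rw [Function.comp_apply, Nat.cast_ite, Nat.cast_zero, Nat.cast_one]
  exact if_congr Iff.rfl rfl rfl

theorem hartigan_bottom_up_general {S : Type} [Fintype S] [Nonempty S]
    (ts : List (RTree S)) :
    subMP (RTree.node ts) =
      (ts.map subMP).sum +
        ((ts.length - Finset.univ.sup (fun A : S => kCount ts A) : ℕ) : ℕ∞) := by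
  obtain ⟨A₀, -, hA₀⟩ :=
    Finset.exists_mem_eq_sup Finset.univ Finset.univ_nonempty (fun A : S => kCount ts A)
  refine le_antisymm ((iInf_le _ A₀).trans_eq ?_) (le_iInf fun A => ?_)
  · rw [condCost_node, hA₀]
  · rw [condCost_node]
    gcongr
    exact Finset.le_sup (Finset.mem_univ A)

/-- Hartigan's bottom-up rule: for an internal node with children `ts`
(`d = ts.length`), if `K = max_A k(A)` where `k(A)` counts the children whose
upper set contains `A`, then the MP-cost of the subtree equals the sum of the
children's subtree MP-costs plus `d - K`. -/
theorem hartigan_bottom_up {S : Type} [Fintype S] [Nonempty S]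
    (ts : List (RTree S)) (hts : ts ≠ []) :
    subMP (RTree.node ts) =
      (ts.map subMP).sum +
        ((ts.length - Finset.univ.sup (fun A : S => kCount ts A) : ℕ) : ℕ∞) :=
  hartigan_bottom_up_general ts
end
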